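/- arXiv:1910.00773 — 4 statements merged into one kernel-verified Lean document; each statement's English description precedes it below -/
import Mathlib

section
/- Let Δ > 0 and let p₁ = (x₁, y₁) and p₂ = (x₂, y₂) be two points in ℝ². If the shift b is chosen uniformly at random from [0, Δ]², then the probability that p₁ and p₂ lie in different cells of the shifted grid satisfies P[id_{Δ,b}(p₁) ≠ id_{Δ,b}(p₂)] ≤ min((|x₁ − x₂| + |y₁ − y₂|)/Δ, 1). -/
open MeasureTheory

noncomputable section

/-- Points in the plane with the Euclidean distance. -/
abbrev Pt := EuclideanSpace ℝ (Fin 2)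

/-- The cell of the grid with side length `Δ`, shifted by `b`, containing the point `p`. -/
def gridId (Δ : ℝ) (b : Fin 2 → ℝ) (p : Pt) : ℤ × ℤ :=
  (⌊(p 0 + b 0) / Δ⌋, ⌊(p 1 + b 1) / Δ⌋)

/-- The box `[0, Δ]²` of possible shifts. -/
def shiftBox (Δ : ℝ) : Set (Fin 2 → ℝ) := Set.Icc 0 (fun _ => Δ)

/-- The uniform (normalized Lebesgue) measure on the box `[0, Δ]²`. -/
def unifShift (Δ : ℝ) : Measure (Fin 2 → ℝ) :=
  (volume (shiftBox Δ))⁻¹ • volume.restrict (shiftBox Δ)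


-- 1D core lemma, ordered version
lemma oneD_le (Δ x₁ x₂ : ℝ) (hΔ : 0 < Δ) (h12 : x₁ ≤ x₂) :
    volume {t : ℝ | (0 ≤ t ∧ t ≤ Δ) ∧ ⌊(x₁ + t) / Δ⌋ ≠ ⌊(x₂ + t) / Δ⌋} ≤
      ENNReal.ofReal (x₂ - x₁) := by
  by_cases hd : x₂ - x₁ < Δ
  · set m : ℝ := ((⌊x₁ / Δ⌋ : ℤ) : ℝ) with hm
    have hmx : m * Δ ≤ x₁ := by
      have h := Int.floor_le (x₁ / Δ)
      rw [← hm] at h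
      have := (le_div_iff₀ hΔ).mp h
      linarith
    have hmx2 : x₁ < (m + 1) * Δ := by
      have h := Int.lt_floor_add_one (x₁ / Δ)
      rw [← hm] at h
      have := (div_lt_iff₀ hΔ).mp h
      linarith
    have hsub : {t : ℝ | (0 ≤ t ∧ t ≤ Δ) ∧ ⌊(x₁ + t) / Δ⌋ ≠ ⌊(x₂ + t) / Δ⌋} ⊆
        Set.Ico (max 0 ((m + 1) * Δ - x₂)) ((m + 1) * Δ - x₁) ∪
        Set.Icc ((m + 2) * Δ - x₂) Δ := by
      rintro t ⟨⟨ht0, htΔ⟩, hne⟩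
      have hmono : ⌊(x₁ + t) / Δ⌋ ≤ ⌊(x₂ + t) / Δ⌋ := by
        apply Int.floor_le_floor; gcongr
      have hlt : ⌊(x₁ + t) / Δ⌋ < ⌊(x₂ + t) / Δ⌋ := lt_of_le_of_ne hmono hne
      set n : ℤ := ⌊(x₂ + t) / Δ⌋ with hn
      have h1 : (x₁ + t) / Δ < (n : ℝ) := by
        have h1' : (⌊(x₁+t)/Δ⌋ : ℝ) + 1 ≤ (n : ℝ) := by exact_mod_cast hlt
        have := Int.lt_floor_add_one ((x₁ + t) / Δ)
        linarith
      have h2 : (n : ℝ) ≤ (x₂ + t) / Δ := Int.floor_le _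
      have h1'' : x₁ + t < n * Δ := by
        have := (div_lt_iff₀ hΔ).mp h1; linarith
      have h2'' : (n : ℝ) * Δ ≤ x₂ + t := by
        have := (le_div_iff₀ hΔ).mp h2; linarith
      have hnlo : (⌊x₁ / Δ⌋ : ℤ) < n := by
        have : x₁ / Δ < (n : ℝ) := by
          apply lt_of_le_of_lt _ h1; gcongr; linarith
        exact_mod_cast Int.floor_lt.mpr this
      have hnhi : n ≤ ⌊x₁ / Δ⌋ + 2 := by
        have hr : (n : ℝ) < m + 3 := by
          have : (n:ℝ) * Δ < (m + 3) * Δ := by nlinarith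
          exact lt_of_mul_lt_mul_right this hΔ.le
        rw [hm] at hr
        have : (n : ℤ) < ⌊x₁ / Δ⌋ + 3 := by exact_mod_cast hr
        omega
      have hcase : n = ⌊x₁ / Δ⌋ + 1 ∨ n = ⌊x₁ / Δ⌋ + 2 := by omega
      rcases hcase with hc | hc
      · left
        have hcr : (n : ℝ) = m + 1 := by rw [hc]; push_cast [hm]; ring
        constructor
        · exact max_le ht0 (by nlinarith)
        · nlinarith
      · right
        have hcr : (n : ℝ) = m + 2 := by rw [hc]; push_cast [hm]; ring
        exact ⟨by nlinarith, htΔ⟩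
    calc volume {t : ℝ | (0 ≤ t ∧ t ≤ Δ) ∧ ⌊(x₁ + t) / Δ⌋ ≠ ⌊(x₂ + t) / Δ⌋}
        ≤ volume (Set.Ico (max 0 ((m + 1) * Δ - x₂)) ((m + 1) * Δ - x₁) ∪
            Set.Icc ((m + 2) * Δ - x₂) Δ) := measure_mono hsub
      _ ≤ volume (Set.Ico (max 0 ((m + 1) * Δ - x₂)) ((m + 1) * Δ - x₁)) +
            volume (Set.Icc ((m + 2) * Δ - x₂) Δ) := measure_union_le _ _
      _ ≤ ENNReal.ofReal (x₂ - x₁) := by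
          rw [Real.volume_Ico, Real.volume_Icc]
          rcases le_total x₂ ((m + 1) * Δ) with h | h
          · have h2 : Δ - ((m + 2) * Δ - x₂) ≤ 0 := by nlinarith
            have hmax : max 0 ((m + 1) * Δ - x₂) = (m + 1) * Δ - x₂ :=
              max_eq_right (by nlinarith)
            rw [hmax, ENNReal.ofReal_eq_zero.mpr h2, add_zero]
            apply ENNReal.ofReal_le_ofReal; linarith
          · have hmax : max 0 ((m + 1) * Δ - x₂) = 0 := max_eq_left (by nlinarith)
            rw [hmax, sub_zero, ← ENNReal.ofReal_add (by nlinarith) (by nlinarith)]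
            apply ENNReal.ofReal_le_ofReal; nlinarith
  · push_neg at hd
    calc volume {t : ℝ | (0 ≤ t ∧ t ≤ Δ) ∧ ⌊(x₁ + t) / Δ⌋ ≠ ⌊(x₂ + t) / Δ⌋}
        ≤ volume (Set.Icc (0:ℝ) Δ) := measure_mono (fun t ht => ⟨ht.1.1, ht.1.2⟩)
      _ = ENNReal.ofReal Δ := by rw [Real.volume_Icc, sub_zero]
      _ ≤ ENNReal.ofReal (x₂ - x₁) := ENNReal.ofReal_le_ofReal hd

lemma oneD (Δ x₁ x₂ : ℝ) (hΔ : 0 < Δ) :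
    volume {t : ℝ | (0 ≤ t ∧ t ≤ Δ) ∧ ⌊(x₁ + t) / Δ⌋ ≠ ⌊(x₂ + t) / Δ⌋} ≤
      ENNReal.ofReal (|x₁ - x₂|) := by
  rcases le_total x₁ x₂ with h | h
  · rw [abs_sub_comm, abs_of_nonneg (by linarith : (0:ℝ) ≤ x₂ - x₁)]
    exact oneD_le Δ x₁ x₂ hΔ h
  · rw [abs_of_nonneg (by linarith : (0:ℝ) ≤ x₁ - x₂)]
    have hset : {t : ℝ | (0 ≤ t ∧ t ≤ Δ) ∧ ⌊(x₁ + t) / Δ⌋ ≠ ⌊(x₂ + t) / Δ⌋} =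
        {t : ℝ | (0 ≤ t ∧ t ≤ Δ) ∧ ⌊(x₂ + t) / Δ⌋ ≠ ⌊(x₁ + t) / Δ⌋} := by
      ext t; simp [ne_comm]
    rw [hset]
    exact oneD_le Δ x₂ x₁ hΔ h

lemma boxVol (Δ : ℝ) : volume (Set.Icc (0 : Fin 2 → ℝ) (fun _ => Δ)) =
    ENNReal.ofReal Δ * ENNReal.ofReal Δ := by
  rw [Real.volume_Icc_pi]
  simp [Fin.prod_univ_two]
  rw [sq]

lemma coordD (Δ : ℝ) (hΔ : 0 < Δ) (x₁ x₂ : ℝ) (i : Fin 2) :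
    ((volume (Set.Icc (0 : Fin 2 → ℝ) (fun _ => Δ)))⁻¹ •
      volume.restrict (Set.Icc (0 : Fin 2 → ℝ) (fun _ => Δ)))
      {b : Fin 2 → ℝ | ⌊(x₁ + b i) / Δ⌋ ≠ ⌊(x₂ + b i) / Δ⌋} ≤
      ENNReal.ofReal (|x₁ - x₂| / Δ) := by
  set D : Set ℝ := {t : ℝ | (0 ≤ t ∧ t ≤ Δ) ∧ ⌊(x₁ + t) / Δ⌋ ≠ ⌊(x₂ + t) / Δ⌋} with hD
  have hsub : {b : Fin 2 → ℝ | ⌊(x₁ + b i) / Δ⌋ ≠ ⌊(x₂ + b i) / Δ⌋} ∩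
      Set.Icc (0 : Fin 2 → ℝ) (fun _ => Δ) ⊆
      Set.univ.pi (fun j => if j = i then D else Set.Icc 0 Δ) := by
    rintro b ⟨hb1, hb2⟩ j _
    have h0 : (0 : Fin 2 → ℝ) ≤ b := hb2.1
    have h1 : b ≤ (fun _ => Δ) := hb2.2
    by_cases hj : j = i
    · subst hj
      simp only [if_pos rfl, hD, Set.mem_setOf_eq]
      exact ⟨⟨h0 j, h1 j⟩, hb1⟩
    · simp only [if_neg hj, Set.mem_Icc]
      exact ⟨h0 j, h1 j⟩
  have hpi : volume (Set.univ.pi (fun j => if j = i then D else Set.Icc (0:ℝ) Δ)) ≤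
      ENNReal.ofReal |x₁ - x₂| * ENNReal.ofReal Δ := by
    rw [volume_pi_pi]
    have hI : volume (Set.Icc (0:ℝ) Δ) = ENNReal.ofReal Δ := by
      rw [Real.volume_Icc, sub_zero]
    fin_cases i
    · simp only [Fin.prod_univ_two]
      norm_num
      exact mul_le_mul_left (oneD Δ x₁ x₂ hΔ) _
    · simp only [Fin.prod_univ_two]
      norm_num
      rw [mul_comm]
      exact mul_le_mul_left (oneD Δ x₁ x₂ hΔ) _
  rw [Measure.smul_apply, smul_eq_mul, Measure.restrict_apply' measurableSet_Icc, boxVol]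
  have hmeas : volume ({b : Fin 2 → ℝ | ⌊(x₁ + b i) / Δ⌋ ≠ ⌊(x₂ + b i) / Δ⌋} ∩
      Set.Icc (0 : Fin 2 → ℝ) (fun _ => Δ)) ≤ ENNReal.ofReal |x₁ - x₂| * ENNReal.ofReal Δ :=
    le_trans (measure_mono hsub) hpi
  have hc0 : ENNReal.ofReal Δ ≠ 0 := by
    simp [ENNReal.ofReal_eq_zero]; linarith
  have hct : ENNReal.ofReal Δ ≠ ⊤ := ENNReal.ofReal_ne_top
  calc (ENNReal.ofReal Δ * ENNReal.ofReal Δ)⁻¹ * volume _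
      ≤ (ENNReal.ofReal Δ * ENNReal.ofReal Δ)⁻¹ *
        (ENNReal.ofReal |x₁ - x₂| * ENNReal.ofReal Δ) := by gcongr
    _ ≤ ENNReal.ofReal (|x₁ - x₂| / Δ) := by
        rw [← ENNReal.div_eq_inv_mul]
        rw [ENNReal.div_le_iff (by simp [hc0, hct, mul_ne_zero]) (ENNReal.mul_ne_top hct hct)]
        rw [← ENNReal.ofReal_mul (abs_nonneg _), ← ENNReal.ofReal_mul (by positivity),
          ← ENNReal.ofReal_mul (by positivity)]
        apply ENNReal.ofReal_le_ofReal
        apply le_of_eq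
        field_simp

lemma unif_le_one' (Δ : ℝ) (hΔ : 0 < Δ) (s : Set (Fin 2 → ℝ)) :
    ((volume (Set.Icc (0 : Fin 2 → ℝ) (fun _ => Δ)))⁻¹ •
      volume.restrict (Set.Icc (0 : Fin 2 → ℝ) (fun _ => Δ))) s ≤ 1 := by
  have hc0 : ENNReal.ofReal Δ ≠ 0 := by
    simp [ENNReal.ofReal_eq_zero]; linarith
  have hct : ENNReal.ofReal Δ ≠ ⊤ := ENNReal.ofReal_ne_top
  rw [Measure.smul_apply, smul_eq_mul, boxVol]
  calc (ENNReal.ofReal Δ * ENNReal.ofReal Δ)⁻¹ *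
        (volume.restrict (Set.Icc (0 : Fin 2 → ℝ) (fun _ => Δ))) s
      ≤ (ENNReal.ofReal Δ * ENNReal.ofReal Δ)⁻¹ *
        (volume.restrict (Set.Icc (0 : Fin 2 → ℝ) (fun _ => Δ))) Set.univ := by
        exact mul_le_mul_right (measure_mono (Set.subset_univ _)) _
    _ = (ENNReal.ofReal Δ * ENNReal.ofReal Δ)⁻¹ * (ENNReal.ofReal Δ * ENNReal.ofReal Δ) := by
        rw [Measure.restrict_apply_univ, boxVol]
    _ = 1 := ENNReal.inv_mul_cancel (mul_ne_zero hc0 hc0) (ENNReal.mul_ne_top hct hct)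

/-- If the shift `b` is chosen uniformly at random from `[0, Δ]²`, the probability that
`p₁ = (x₁, y₁)` and `p₂ = (x₂, y₂)` fall into different cells of the shifted grid is at most
`min ((|x₁ - x₂| + |y₁ - y₂|) / Δ) 1`. -/
theorem prob_different_cells_le (Δ : ℝ) (hΔ : 0 < Δ) (p₁ p₂ : Pt) :
    unifShift Δ {b | gridId Δ b p₁ ≠ gridId Δ b p₂} ≤
      ENNReal.ofReal (min ((|p₁ 0 - p₂ 0| + |p₁ 1 - p₂ 1|) / Δ) 1) := by
  have hbox : shiftBox Δ = Set.Icc (0 : Fin 2 → ℝ) (fun _ => Δ) := rfl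
  rcases le_total ((|p₁ 0 - p₂ 0| + |p₁ 1 - p₂ 1|) / Δ) 1 with h | h
  · rw [min_eq_left h]
    have hsub : {b : Fin 2 → ℝ | gridId Δ b p₁ ≠ gridId Δ b p₂} ⊆
        {b : Fin 2 → ℝ | ⌊(p₁ 0 + b 0) / Δ⌋ ≠ ⌊(p₂ 0 + b 0) / Δ⌋} ∪
        {b : Fin 2 → ℝ | ⌊(p₁ 1 + b 1) / Δ⌋ ≠ ⌊(p₂ 1 + b 1) / Δ⌋} := by
      intro b hb
      by_contra hc
      simp only [Set.mem_union, Set.mem_setOf_eq] at hc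
      push_neg at hc
      exact hb (by simp [gridId, hc.1, hc.2])
    calc unifShift Δ {b | gridId Δ b p₁ ≠ gridId Δ b p₂}
        ≤ unifShift Δ ({b : Fin 2 → ℝ | ⌊(p₁ 0 + b 0) / Δ⌋ ≠ ⌊(p₂ 0 + b 0) / Δ⌋} ∪
          {b : Fin 2 → ℝ | ⌊(p₁ 1 + b 1) / Δ⌋ ≠ ⌊(p₂ 1 + b 1) / Δ⌋}) := measure_mono hsub
      _ ≤ unifShift Δ {b : Fin 2 → ℝ | ⌊(p₁ 0 + b 0) / Δ⌋ ≠ ⌊(p₂ 0 + b 0) / Δ⌋} +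
          unifShift Δ {b : Fin 2 → ℝ | ⌊(p₁ 1 + b 1) / Δ⌋ ≠ ⌊(p₂ 1 + b 1) / Δ⌋} :=
          measure_union_le _ _
      _ ≤ ENNReal.ofReal (|p₁ 0 - p₂ 0| / Δ) + ENNReal.ofReal (|p₁ 1 - p₂ 1| / Δ) := by
          apply add_le_add
          · exact coordD Δ hΔ (p₁ 0) (p₂ 0) 0
          · exact coordD Δ hΔ (p₁ 1) (p₂ 1) 1
      _ = ENNReal.ofReal ((|p₁ 0 - p₂ 0| + |p₁ 1 - p₂ 1|) / Δ) := by
          rw [← ENNReal.ofReal_add (by positivity) (by positivity), add_div]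
  · rw [min_eq_right h, ENNReal.ofReal_one]
    exact unif_le_one' Δ hΔ _
end
end

section
/- Let Δ > 0 and let (a₁, c₁), …, (a_k, c_k) be pairs of points in ℝ² with dist(a_i, c_i) ≤ Δ for every i. If the shift b is chosen uniformly at random from [0, Δ]², then the expected number of indices i such that a_i and c_i lie in different cells of the shifted grid satisfies E[#{i : id_{Δ,b}(a_i) ≠ id_{Δ,b}(c_i)}] ≤ (2/Δ)·Σ_{i=1}^k dist(a_i, c_i). -/
open MeasureTheory

noncomputable section

/-!
Two points lie in different cells only if one of their coordinates is separated by the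
one-dimensional grid, so a union bound reduces the claim to one coordinate. There the set of
separating shifts is `Δ`-periodic, so its measure in the period `[0, Δ]` equals its measure in
the period `(-x, -x + Δ]`, where it is an interval of length `|x - y|`. Since each coordinate
difference is at most the Euclidean distance, a pair is separated with probability at most
`2 dist / Δ`, and linearity of expectation sums this over the pairs.
-/

open Set Function

lemma integral_card_filter_eq_sum_measureReal {Ω ι : Type*} [MeasurableSpace Ω] {μ : Measure Ω}
    [IsFiniteMeasure μ] [Fintype ι] (p : ι → Ω → Prop) [∀ ω, DecidablePred (p · ω)]
    (hp : ∀ i, MeasurableSet {ω | p i ω}) :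
    ∫ ω, ((Finset.univ.filter (p · ω)).card : ℝ) ∂μ = ∑ i, μ.real {ω | p i ω} := by
  calc ∫ ω, ((Finset.univ.filter (p · ω)).card : ℝ) ∂μ
      = ∫ ω, ∑ i, {ω | p i ω}.indicator 1 ω ∂μ := by
        congr 1 with ω
        simp only [Finset.natCast_card_filter, indicator_apply, mem_ofPred_eq, Pi.one_apply]
    _ = ∑ i, ∫ ω, {ω | p i ω}.indicator 1 ω ∂μ :=
        integral_finsetSum _ fun i _ => (integrable_const 1).indicator (hp i)
    _ = ∑ i, μ.real {ω | p i ω} := by simp only [integral_indicator_one (hp _)]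

def separatingShifts (Δ x y : ℝ) : Set ℝ := {t | ⌊(x + t) / Δ⌋ ≠ ⌊(y + t) / Δ⌋}

lemma separatingShifts_comm (Δ x y : ℝ) : separatingShifts Δ x y = separatingShifts Δ y x := by
  simp only [separatingShifts, ne_comm]

lemma measurableSet_separatingShifts (Δ x y : ℝ) : MeasurableSet (separatingShifts Δ x y) :=
  (measurableSet_eq_fun (by fun_prop) (by fun_prop)).compl

lemma zsmul_add_mem_separatingShifts_iff {Δ : ℝ} (hΔ : Δ ≠ 0) (x y t : ℝ) (n : ℤ) :
    n • Δ + t ∈ separatingShifts Δ x y ↔ t ∈ separatingShifts Δ x y := by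
  have hshift (z : ℝ) : ⌊(z + (n • Δ + t)) / Δ⌋ = ⌊(z + t) / Δ⌋ + n := by
    rw [← Int.floor_add_intCast]
    congr 1
    field_simp
    simp only [zsmul_eq_mul]
    ring
  simp only [separatingShifts, mem_ofPred_eq, hshift, ne_eq, add_left_inj]

lemma separatingShifts_inter_Ioc_subset {Δ x y : ℝ} (hΔ : 0 < Δ) (hxy : x ≤ y) :
    separatingShifts Δ x y ∩ Ioc (-x) (-x + Δ) ⊆ Icc (Δ - y) (Δ - x) := by
  rintro t ⟨hsep, hxt, htx⟩
  refine ⟨?_, by linarith⟩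
  by_contra! hlt
  have hx : ⌊(x + t) / Δ⌋ = 0 := Int.floor_eq_zero_iff.2
    ⟨div_nonneg (by linarith) hΔ.le, (div_lt_one hΔ).2 (by linarith)⟩
  have hy : ⌊(y + t) / Δ⌋ = 0 := Int.floor_eq_zero_iff.2
    ⟨div_nonneg (by linarith) hΔ.le, (div_lt_one hΔ).2 (by linarith)⟩
  exact hsep (hx.trans hy.symm)

lemma volume_separatingShifts_inter_Icc_le {Δ : ℝ} (hΔ : 0 < Δ) (x y : ℝ) :
    volume (separatingShifts Δ x y ∩ Icc 0 Δ) ≤ ENNReal.ofReal (dist x y) := by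
  wlog hxy : x ≤ y generalizing x y
  · rw [separatingShifts_comm, dist_comm]
    exact this y x (le_of_not_ge hxy)
  have hinv (g : AddSubgroup.zmultiples Δ) :
      (g +ᵥ ·) ⁻¹' separatingShifts Δ x y = separatingShifts Δ x y := by
    obtain ⟨_, n, rfl⟩ := g
    ext t
    exact zsmul_add_mem_separatingShifts_iff hΔ.ne' x y t n
  calc volume (separatingShifts Δ x y ∩ Icc 0 Δ)
      = volume (separatingShifts Δ x y ∩ Ioc 0 (0 + Δ)) := by
        rw [zero_add]
        exact measure_congr (ae_eq_refl _ |>.inter Ioc_ae_eq_Icc.symm)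
    _ = volume (separatingShifts Δ x y ∩ Ioc (-x) (-x + Δ)) :=
        (isAddFundamentalDomain_Ioc hΔ 0).measure_set_eq (isAddFundamentalDomain_Ioc hΔ (-x))
          (measurableSet_separatingShifts Δ x y) hinv
    _ ≤ volume (Icc (Δ - y) (Δ - x)) := measure_mono (separatingShifts_inter_Ioc_subset hΔ hxy)
    _ = ENNReal.ofReal (dist x y) := by
        rw [Real.volume_Icc, dist_comm, Real.dist_eq, abs_of_nonneg (by linarith)]
        ring_nf

lemma volume_real_separatingShifts_inter_Icc_le {Δ : ℝ} (hΔ : 0 < Δ) (x y : ℝ) :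
    volume.real (separatingShifts Δ x y ∩ Icc 0 Δ) ≤ dist x y :=
  ENNReal.toReal_le_of_le_ofReal dist_nonneg (volume_separatingShifts_inter_Icc_le hΔ x y)

lemma volume_eval_preimage_inter_Icc_mul {ι : Type*} [Fintype ι] (a b : ι → ℝ) (j : ι)
    (T : Set ℝ) :
    volume (eval j ⁻¹' T ∩ Icc a b) * volume (Icc (a j) (b j))
      = volume (T ∩ Icc (a j) (b j)) * volume (Icc a b) := by
  classical
  set I : ι → Set ℝ := fun i => Icc (a i) (b i)
  have hcyl : eval j ⁻¹' T ∩ Icc a b = univ.pi (update I j (T ∩ I j)) := by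
    rw [eval_preimage, ← pi_univ_Icc, ← pi_inter_distrib]
    congr 1
    ext i : 1
    rcases eq_or_ne i j with rfl | hij
    · simp [I]
    · simp [hij, I]
  have hprod (f : ι → Set ℝ) :
      volume (univ.pi f) = volume (f j) * ∏ i ∈ Finset.univ.erase j, volume (f i) := by
    rw [volume_pi_pi, ← Finset.mul_prod_erase _ _ (Finset.mem_univ j)]
  rw [hcyl, ← pi_univ_Icc, hprod, hprod, update_self,
    Finset.prod_congr rfl fun i hi => by rw [update_of_ne (Finset.ne_of_mem_erase hi)]]
  ring

lemma measurableSet_shiftBox (Δ : ℝ) : MeasurableSet (shiftBox Δ) := measurableSet_Icc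

lemma unifShift_real_apply (Δ : ℝ) (s : Set (Fin 2 → ℝ)) :
    (unifShift Δ).real s = volume.real (s ∩ shiftBox Δ) / volume.real (shiftBox Δ) := by
  rw [unifShift, measureReal_ennreal_smul_apply,
    measureReal_restrict_apply' (measurableSet_shiftBox Δ), ENNReal.toReal_inv, ← measureReal_def,
    inv_mul_eq_div]

lemma volume_real_shiftBox {Δ : ℝ} (hΔ : 0 ≤ Δ) : volume.real (shiftBox Δ) = Δ ^ 2 := by
  rw [shiftBox, measureReal_def, Real.volume_Icc_pi_toReal (a := 0) (fun _ => hΔ)]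
  simp [sq]

lemma isProbabilityMeasure_unifShift {Δ : ℝ} (hΔ : 0 < Δ) :
    IsProbabilityMeasure (unifShift Δ) :=
  -- `unifShift Δ` is by definition the conditioned measure `volume[|shiftBox Δ]`.
  ProbabilityTheory.cond_isProbabilityMeasure_of_finite
    (by simp [shiftBox, Real.volume_Icc_pi, hΔ]) isCompact_Icc.measure_lt_top.ne

lemma unifShift_real_eval_preimage {Δ : ℝ} (hΔ : 0 < Δ) (j : Fin 2) (T : Set ℝ) :
    (unifShift Δ).real (eval j ⁻¹' T) = volume.real (T ∩ Icc 0 Δ) / Δ := by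
  have h := congrArg ENNReal.toReal (volume_eval_preimage_inter_Icc_mul 0 (fun _ => Δ) j T)
  simp only [ENNReal.toReal_mul, ← measureReal_def, Real.volume_real_Icc_of_le hΔ.le,
    Pi.zero_apply, sub_zero] at h
  change volume.real (_ ∩ shiftBox Δ) * Δ = _ * volume.real (shiftBox Δ) at h
  rw [volume_real_shiftBox hΔ.le] at h
  rw [unifShift_real_apply, volume_real_shiftBox hΔ.le, div_eq_div_iff (by positivity) hΔ.ne']
  linear_combination h

lemma measurable_gridId (Δ : ℝ) (p : Pt) : Measurable (gridId Δ · p) := by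
  unfold gridId
  fun_prop

lemma gridId_ne_subset (Δ : ℝ) (p q : Pt) :
    {b | gridId Δ b p ≠ gridId Δ b q} ⊆
      ⋃ j, eval j ⁻¹' separatingShifts Δ (p j) (q j) := by
  intro b hb
  simp only [mem_iUnion, mem_preimage, eval, separatingShifts, mem_ofPred_eq]
  by_contra! h
  exact hb <| Prod.ext (by simpa [gridId, add_comm] using h 0)
    (by simpa [gridId, add_comm] using h 1)

lemma unifShift_real_gridId_ne_le {Δ : ℝ} (hΔ : 0 < Δ) (p q : Pt) :
    (unifShift Δ).real {b | gridId Δ b p ≠ gridId Δ b q} ≤ 2 / Δ * dist p q := by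
  have := isProbabilityMeasure_unifShift hΔ
  calc (unifShift Δ).real {b | gridId Δ b p ≠ gridId Δ b q}
      ≤ ∑ j, (unifShift Δ).real (eval j ⁻¹' separatingShifts Δ (p j) (q j)) :=
        (measureReal_mono (gridId_ne_subset Δ p q)).trans (measureReal_iUnion_fintype_le _)
    _ ≤ ∑ _j : Fin 2, dist p q / Δ := by
        gcongr with j
        rw [unifShift_real_eval_preimage hΔ]
        gcongr
        calc volume.real (separatingShifts Δ (p j) (q j) ∩ Icc 0 Δ)
            ≤ dist (p j) (q j) := volume_real_separatingShifts_inter_Icc_le hΔ _ _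
          _ ≤ dist p q := PiLp.dist_apply_le p q j
    _ = 2 / Δ * dist p q := by
        simp only [Finset.sum_const, Finset.card_univ, Fintype.card_fin]
        ring

theorem expected_separated_pairs_le_general (k : ℕ) (a c : Fin k → Pt) (Δ : ℝ) (hΔ : 0 < Δ) :
    ∫ b, ((Finset.univ.filter
        (fun i : Fin k => gridId Δ b (a i) ≠ gridId Δ b (c i))).card : ℝ) ∂(unifShift Δ) ≤
      (2 / Δ) * ∑ i, dist (a i) (c i) := by
  have := isProbabilityMeasure_unifShift hΔ
  rw [integral_card_filter_eq_sum_measureReal (fun i b => gridId Δ b (a i) ≠ gridId Δ b (c i))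
    fun i => (measurableSet_eq_fun (measurable_gridId Δ (a i)) (measurable_gridId Δ (c i))).compl,
    Finset.mul_sum]
  exact Finset.sum_le_sum fun i _ => unifShift_real_gridId_ne_le hΔ (a i) (c i)

/-- If each pair `(a i, c i)` of points is at Euclidean distance at most `Δ` and the shift `b`
is chosen uniformly at random from `[0, Δ]²`, then the expected number of indices `i` such that
`a i` and `c i` fall into different cells of the shifted grid is at most
`(2 / Δ) · Σ_i dist (a i) (c i)`. -/
theorem expected_separated_pairs_le (k : ℕ) (a c : Fin k → Pt) (Δ : ℝ) (hΔ : 0 < Δ)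
    (hclose : ∀ i, dist (a i) (c i) ≤ Δ) :
    ∫ b, ((Finset.univ.filter
        (fun i : Fin k => gridId Δ b (a i) ≠ gridId Δ b (c i))).card : ℝ) ∂(unifShift Δ) ≤
      (2 / Δ) * ∑ i, dist (a i) (c i) :=
  expected_separated_pairs_le_general k a c Δ hΔ
end
end

section
/- Let P = ⟨p₁, …, p_n⟩ and Q = ⟨q₁, …, q_m⟩ be point sequences in ℝ² and let D′(i, j) = GED(P_i, Q_j) be the geometric edit distance between their prefixes with gap penalty 1. Then for all 1 ≤ i ≤ n and 1 ≤ j ≤ m, 0 ≤ D′(i, j) − D′(i−1, j−1) ≤ 2; in particular, the values along each diagonal of the dynamic programming matrix are non-decreasing. -/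
noncomputable section

/-- A monotone matching between index sets `Fin n` and `Fin m`: a set of index pairs with
distinct first indices, distinct second indices, such that first indices and second indices
are ordered consistently. -/
structure MMatch (n m : ℕ) where
  pairs : Finset (Fin n × Fin m)
  inj1 : ∀ p ∈ pairs, ∀ q ∈ pairs, p.1 = q.1 → p = q
  inj2 : ∀ p ∈ pairs, ∀ q ∈ pairs, p.2 = q.2 → p = q
  mono : ∀ p ∈ pairs, ∀ q ∈ pairs, (p.1 < q.1 ↔ p.2 < q.2)

/-- The number of gap points `|Γ(M)|`: indices of both sequences left unmatched by `M`. -/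
def gapCount {n m : ℕ} (M : MMatch n m) : ℕ :=
  (n - M.pairs.card) + (m - M.pairs.card)
/-- The cost `δ(M)` (gap penalty 1) of a matching between the first `n` points of `P` and the
first `m` points of `Q`. -/
def cost (n m : ℕ) (P Q : ℕ → Pt) (M : MMatch n m) : ℝ :=
  (∑ p ∈ M.pairs, dist (P p.1) (Q p.2)) + (gapCount M : ℝ)

/-- The geometric edit distance between `⟨P 0, …, P (n-1)⟩` and `⟨Q 0, …, Q (m-1)⟩`:
the minimum cost over all monotone matchings. -/
def GED (n m : ℕ) (P Q : ℕ → Pt) : ℝ :=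
  sInf {c | ∃ M : MMatch n m, c = cost n m P Q M}

/-!
Deleting the last point of both sequences turns a monotone matching of `P_i, Q_j` into one of
`P_{i-1}, Q_{j-1}`: only pairs in the last row or column are lost, and by monotonicity there is
at most one such pair, so the two freed gap points are paid for by the two gap points that
disappear, and the cost does not increase. Conversely a matching of `P_{i-1}, Q_{j-1}` is one of
`P_i, Q_j` with exactly two more gap points.
-/

open Finset

namespace MMatch

variable {n m n' m' : ℕ}

theorem card_le_left (M : MMatch n m) : #M.pairs ≤ n := by
  simpa using card_le_card_of_injOn Prod.fst (fun _ _ => mem_coe.2 (mem_univ _)) M.inj1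

theorem card_le_right (M : MMatch n m) : #M.pairs ≤ m := by
  simpa using card_le_card_of_injOn Prod.snd (fun _ _ => mem_coe.2 (mem_univ _)) M.inj2

def empty (n m : ℕ) : MMatch n m := ⟨∅, by simp, by simp, by simp⟩

def map (f : Fin n ↪o Fin n') (g : Fin m ↪o Fin m') (M : MMatch n m) : MMatch n' m' where
  pairs := M.pairs.map (f.toEmbedding.prodMap g.toEmbedding)
  inj1 := by
    simp only [mem_map]
    rintro _ ⟨p, hp, rfl⟩ _ ⟨q, hq, rfl⟩ h
    simp_all [M.inj1 p hp q hq (f.injective h)]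
  inj2 := by
    simp only [mem_map]
    rintro _ ⟨p, hp, rfl⟩ _ ⟨q, hq, rfl⟩ h
    simp_all [M.inj2 p hp q hq (g.injective h)]
  mono := by
    simp only [mem_map]
    rintro _ ⟨p, hp, rfl⟩ _ ⟨q, hq, rfl⟩
    simpa using M.mono p hp q hq

def comap (f : Fin n ↪o Fin n') (g : Fin m ↪o Fin m') (M : MMatch n' m') : MMatch n m where
  pairs := M.pairs.preimage (Prod.map f g) (f.injective.prodMap g.injective).injOn
  inj1 p hp q hq h := f.injective.prodMap g.injective <|
    M.inj1 _ (mem_preimage.1 hp) _ (mem_preimage.1 hq) (congrArg f h)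
  inj2 p hp q hq h := f.injective.prodMap g.injective <|
    M.inj2 _ (mem_preimage.1 hp) _ (mem_preimage.1 hq) (congrArg g h)
  mono p hp q hq := by
    simpa using M.mono _ (mem_preimage.1 hp) _ (mem_preimage.1 hq)

@[simp]
theorem mem_map_pairs {f : Fin n ↪o Fin n'} {g : Fin m ↪o Fin m'} {M : MMatch n m}
    {q : Fin n' × Fin m'} : q ∈ (M.map f g).pairs ↔ ∃ p ∈ M.pairs, (f p.1, g p.2) = q :=
  mem_map

@[simp]
theorem mem_comap_pairs {f : Fin n ↪o Fin n'} {g : Fin m ↪o Fin m'} {M : MMatch n' m'}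
    {p : Fin n × Fin m} : p ∈ (M.comap f g).pairs ↔ (f p.1, g p.2) ∈ M.pairs :=
  mem_preimage (hf := (f.injective.prodMap g.injective).injOn)

@[simp]
theorem card_map_pairs (f : Fin n ↪o Fin n') (g : Fin m ↪o Fin m') (M : MMatch n m) :
    #(M.map f g).pairs = #M.pairs :=
  card_map _

def castSucc (M : MMatch n m) : MMatch (n + 1) (m + 1) :=
  M.map Fin.castSuccOrderEmb Fin.castSuccOrderEmb

def restrict (M : MMatch (n + 1) (m + 1)) : MMatch n m :=
  M.comap Fin.castSuccOrderEmb Fin.castSuccOrderEmb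

theorem sum_castSucc {β : Type*} [AddCommMonoid β] (M : MMatch n m) (w : ℕ → ℕ → β) :
    ∑ p ∈ M.castSucc.pairs, w p.1 p.2 = ∑ p ∈ M.pairs, w p.1 p.2 := by
  rw [castSucc, map, sum_map]
  rfl

theorem castSucc_restrict_subset (M : MMatch (n + 1) (m + 1)) :
    M.restrict.castSucc.pairs ⊆ M.pairs := by
  rintro _ h
  obtain ⟨p, hp, rfl⟩ := mem_map_pairs.1 h
  exact mem_comap_pairs.1 hp

theorem touches_last_of_not_mem_castSucc_restrict (M : MMatch (n + 1) (m + 1))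
    {p : Fin (n + 1) × Fin (m + 1)} (hp : p ∈ M.pairs) (hp' : p ∉ M.restrict.castSucc.pairs) :
    p.1 = Fin.last n ∨ p.2 = Fin.last m := by
  by_contra! h
  obtain ⟨a, ha⟩ := Fin.exists_castSucc_eq.2 h.1
  obtain ⟨b, hb⟩ := Fin.exists_castSucc_eq.2 h.2
  have hab : (a, b) ∈ M.restrict.pairs := mem_comap_pairs.2 (by simpa [ha, hb] using hp)
  exact hp' (mem_map_pairs.2 ⟨(a, b), hab, by simp [ha, hb]⟩)

theorem eq_of_mem_of_touches_last (M : MMatch (n + 1) (m + 1)) {p q : Fin (n + 1) × Fin (m + 1)}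
    (hp : p ∈ M.pairs) (hq : q ∈ M.pairs) (hp' : p.1 = Fin.last n ∨ p.2 = Fin.last m)
    (hq' : q.1 = Fin.last n ∨ q.2 = Fin.last m) : p = q := by
  rcases lt_trichotomy p.1 q.1 with h | h | h
  · have h2 := (M.mono p hp q hq).1 h
    exact absurd hp' (not_or.2 ⟨Fin.ne_last_of_lt h, Fin.ne_last_of_lt h2⟩)
  · exact M.inj1 p hp q hq h
  · have h2 := (M.mono q hq p hp).1 h
    exact absurd hq' (not_or.2 ⟨Fin.ne_last_of_lt h, Fin.ne_last_of_lt h2⟩)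

theorem card_le_card_restrict_add_one (M : MMatch (n + 1) (m + 1)) :
    #M.pairs ≤ #M.restrict.pairs + 1 := by
  have hout : #(M.pairs \ M.restrict.castSucc.pairs) ≤ 1 := by
    refine card_le_one.2 fun p hp q hq => ?_
    rw [mem_sdiff] at hp hq
    exact M.eq_of_mem_of_touches_last hp.1 hq.1
      (M.touches_last_of_not_mem_castSucc_restrict hp.1 hp.2)
      (M.touches_last_of_not_mem_castSucc_restrict hq.1 hq.2)
  have hsplit := card_le_card_sdiff_add_card (s := M.pairs) (t := M.restrict.castSucc.pairs)
  have hcard : #M.restrict.castSucc.pairs = #M.restrict.pairs := card_map_pairs _ _ _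
  omega

theorem gapCount_restrict_le (M : MMatch (n + 1) (m + 1)) :
    gapCount M.restrict ≤ gapCount M := by
  have := M.card_le_card_restrict_add_one
  have := M.restrict.card_le_left
  have := M.restrict.card_le_right
  unfold gapCount
  omega

theorem cost_restrict_le (P Q : ℕ → Pt) (M : MMatch (n + 1) (m + 1)) :
    cost n m P Q M.restrict ≤ cost (n + 1) (m + 1) P Q M := by
  have hsum : ∑ p ∈ M.restrict.pairs, dist (P p.1) (Q p.2) ≤
      ∑ p ∈ M.pairs, dist (P p.1) (Q p.2) := by
    rw [← M.restrict.sum_castSucc fun i j => dist (P i) (Q j)]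
    exact sum_le_sum_of_subset_of_nonneg M.castSucc_restrict_subset fun _ _ _ => dist_nonneg
  have hgap : (gapCount M.restrict : ℝ) ≤ gapCount M := by exact_mod_cast M.gapCount_restrict_le
  exact add_le_add hsum hgap

theorem cost_castSucc (P Q : ℕ → Pt) (M : MMatch n m) :
    cost (n + 1) (m + 1) P Q M.castSucc = cost n m P Q M + 2 := by
  have hgap : gapCount M.castSucc = gapCount M + 2 := by
    have := M.card_le_left
    have := M.card_le_right
    simp only [gapCount, castSucc, card_map_pairs]
    omega
  rw [cost, cost, hgap, M.sum_castSucc fun i j => dist (P i) (Q j)]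
  push_cast
  ring

end MMatch

theorem cost_nonneg {n m : ℕ} (P Q : ℕ → Pt) (M : MMatch n m) : 0 ≤ cost n m P Q M :=
  add_nonneg (sum_nonneg fun _ _ => dist_nonneg) (Nat.cast_nonneg _)

theorem GED_le_cost {n m : ℕ} (P Q : ℕ → Pt) (M : MMatch n m) :
    GED n m P Q ≤ cost n m P Q M :=
  csInf_le ⟨0, by rintro _ ⟨M, rfl⟩; exact cost_nonneg P Q M⟩ ⟨M, rfl⟩

theorem le_GED {n m : ℕ} {P Q : ℕ → Pt} {c : ℝ}
    (h : ∀ M : MMatch n m, c ≤ cost n m P Q M) : c ≤ GED n m P Q :=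
  le_csInf ⟨_, MMatch.empty n m, rfl⟩ (by rintro _ ⟨M, rfl⟩; exact h M)

theorem GED_le_GED_succ (n m : ℕ) (P Q : ℕ → Pt) : GED n m P Q ≤ GED (n + 1) (m + 1) P Q :=
  le_GED fun M => (GED_le_cost P Q M.restrict).trans (M.cost_restrict_le P Q)

theorem GED_succ_le_GED_add_two (n m : ℕ) (P Q : ℕ → Pt) :
    GED (n + 1) (m + 1) P Q ≤ GED n m P Q + 2 := by
  have : GED (n + 1) (m + 1) P Q - 2 ≤ GED n m P Q := le_GED fun M => by
    rw [sub_le_iff_le_add, ← M.cost_castSucc]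
    exact GED_le_cost P Q M.castSucc
  linarith

/-- For point sequences `P`, `Q` of lengths `n`, `m` in the plane, the geometric edit distance
`D′(i, j) = GED(P_i, Q_j)` between prefixes satisfies `0 ≤ D′(i, j) − D′(i−1, j−1) ≤ 2` for
all `1 ≤ i ≤ n`, `1 ≤ j ≤ m`; in particular the values along each diagonal of the dynamic
programming matrix are non-decreasing. -/
theorem GED_diag_step (n m : ℕ) (P Q : ℕ → Pt) :
    ∀ i j, 1 ≤ i → i ≤ n → 1 ≤ j → j ≤ m →
      0 ≤ GED i j P Q - GED (i - 1) (j - 1) P Q ∧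
      GED i j P Q - GED (i - 1) (j - 1) P Q ≤ 2 := by
  intro i j hi _ hj _
  obtain ⟨a, rfl⟩ := Nat.exists_eq_add_one.2 hi
  obtain ⟨b, rfl⟩ := Nat.exists_eq_add_one.2 hj
  rw [Nat.add_sub_cancel, Nat.add_sub_cancel]
  exact ⟨sub_nonneg.2 (GED_le_GED_succ a b P Q),
    sub_le_iff_le_add'.2 (GED_succ_le_GED_add_two a b P Q)⟩
end
end

section
/- Let P = ⟨p₁, …, p_n⟩ and Q = ⟨q₁, …, q_n⟩ be point sequences of equal length n in ℝ². If Σ_{i=1}^n dist(p_i, q_i) < 2, then GED(P, Q) with gap penalty 1 equals Σ_{i=1}^n dist(p_i, q_i), and the identity matching {(1, 1), …, (n, n)} is an optimal monotone matching. -/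
noncomputable section

/-- For point sequences `P`, `Q` of equal length `n` in the plane, if
`Σ_{i=1}^n dist(p_i, q_i) < 2` then `GED(P, Q) = Σ_{i=1}^n dist(p_i, q_i)`, and the identity
matching `{(1,1), …, (n,n)}` is an optimal monotone matching. -/
theorem GED_eq_sum_of_small (n : ℕ) (P Q : ℕ → Pt)
    (h : ∑ i ∈ Finset.range n, dist (P i) (Q i) < 2) :
    GED n n P Q = ∑ i ∈ Finset.range n, dist (P i) (Q i) ∧
    ∃ M : MMatch n n,
      M.pairs = (Finset.univ : Finset (Fin n)).image (fun i => (i, i)) ∧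
      cost n n P Q M = GED n n P Q := by
  classical
  set S := ∑ i ∈ Finset.range n, dist (P i) (Q i) with hS
  have hS0 : 0 ≤ S := Finset.sum_nonneg fun i _ => dist_nonneg
  -- identity matching
  have hinj : Function.Injective (fun i : Fin n => ((i, i) : Fin n × Fin n)) := by
    intro a b hab; simpa using congrArg Prod.fst hab
  let Mid : MMatch n n :=
    { pairs := (Finset.univ : Finset (Fin n)).image (fun i => (i, i))
      inj1 := by
        intro p hp q hq hpq
        simp only [Finset.mem_image, Finset.mem_univ, true_and] at hp hq
        obtain ⟨a, rfl⟩ := hp; obtain ⟨b, rfl⟩ := hq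
        simp_all
      inj2 := by
        intro p hp q hq hpq
        simp only [Finset.mem_image, Finset.mem_univ, true_and] at hp hq
        obtain ⟨a, rfl⟩ := hp; obtain ⟨b, rfl⟩ := hq
        simp_all
      mono := by
        intro p hp q hq
        simp only [Finset.mem_image, Finset.mem_univ, true_and] at hp hq
        obtain ⟨a, rfl⟩ := hp; obtain ⟨b, rfl⟩ := hq
        simp }
  have hcard_id : Mid.pairs.card = n := by
    simp [Mid, Finset.card_image_of_injective _ hinj]
  have hcost_id : cost n n P Q Mid = S := by
    unfold cost gapCount
    rw [hcard_id]
    simp only [Nat.sub_self, Nat.cast_zero, add_zero]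
    show ∑ p ∈ (Finset.univ : Finset (Fin n)).image (fun i => (i, i)), dist (P p.1) (Q p.2) = S
    rw [Finset.sum_image (fun a _ b _ hab => hinj hab), hS, ← Fin.sum_univ_eq_sum_range]
  -- lower bound: every matching has cost ≥ S
  have hlb : ∀ M : MMatch n n, S ≤ cost n n P Q M := by
    intro M
    have hcardle : M.pairs.card ≤ n := by
      have : (M.pairs.image Prod.fst).card = M.pairs.card :=
        Finset.card_image_of_injOn (fun p hp q hq hpq => M.inj1 p hp q hq hpq)
      calc M.pairs.card = (M.pairs.image Prod.fst).card := this.symm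
        _ ≤ Fintype.card (Fin n) := Finset.card_le_univ _
        _ = n := by simp
    rcases lt_or_eq_of_le hcardle with hlt | heq
    · -- at least 2 gaps, cost ≥ 2 > S
      have h2 : (2 : ℝ) ≤ (gapCount M : ℝ) := by
        have : 2 ≤ gapCount M := by
          unfold gapCount; omega
        exact_mod_cast this
      have hsum : (0:ℝ) ≤ ∑ p ∈ M.pairs, dist (P p.1) (Q p.2) :=
        Finset.sum_nonneg fun p _ => dist_nonneg
      unfold cost
      nlinarith
    · -- full matching: must be identity
      have himg1 : M.pairs.image Prod.fst = Finset.univ := by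
        apply Finset.eq_univ_of_card
        rw [Finset.card_image_of_injOn (fun p hp q hq hpq => M.inj1 p hp q hq hpq), heq]; simp
      have himg2 : M.pairs.image Prod.snd = Finset.univ := by
        apply Finset.eq_univ_of_card
        rw [Finset.card_image_of_injOn (fun p hp q hq hpq => M.inj2 p hp q hq hpq), heq]; simp
      have hex : ∀ i : Fin n, ∃ p ∈ M.pairs, p.1 = i := by
        intro i
        have : i ∈ M.pairs.image Prod.fst := himg1 ▸ Finset.mem_univ i
        simpa [Finset.mem_image] using this
      choose g hg hgfst using hex
      set f : Fin n → Fin n := fun i => (g i).2 with hf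
      have hmem : ∀ i, (i, f i) ∈ M.pairs := by
        intro i
        have : g i = (i, f i) := Prod.ext (hgfst i) rfl
        rw [← this]; exact hg i
      have hfmono : StrictMono f := by
        intro a b hab
        exact (M.mono _ (hmem a) _ (hmem b)).1 hab
      have hfsurj : Function.Surjective f := by
        intro j
        have : j ∈ M.pairs.image Prod.snd := himg2 ▸ Finset.mem_univ j
        simp only [Finset.mem_image] at this
        obtain ⟨p, hp, hpj⟩ := this
        refine ⟨p.1, ?_⟩
        have : p = (p.1, f p.1) := M.inj1 p hp _ (hmem p.1) rfl
        rw [← hpj, this]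
      have hwf : WellFoundedLT (Fin n) := inferInstance
      have hfid : f = id := by
        refine (StrictMono.range_inj (β := Fin n) (γ := Fin n) hfmono strictMono_id).1 ?_
        rw [Set.range_id, hfsurj.range_eq]
      have hpairs : M.pairs = (Finset.univ : Finset (Fin n)).image (fun i => (i, i)) := by
        ext p
        simp only [Finset.mem_image, Finset.mem_univ, true_and]
        constructor
        · intro hp
          refine ⟨p.1, ?_⟩
          have h1 : p = (p.1, f p.1) := (M.inj1 p hp _ (hmem p.1) rfl).symm ▸
            (M.inj1 p hp _ (hmem p.1) rfl)
          rw [hfid] at h1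
          exact h1.symm
        · rintro ⟨a, rfl⟩
          have := hmem a
          rwa [hfid] at this
      have : cost n n P Q M = S := by
        unfold cost gapCount
        rw [hpairs, Finset.card_image_of_injective _ hinj,
          Finset.sum_image (fun a _ b _ hab => hinj hab)]
        simp [hS, ← Fin.sum_univ_eq_sum_range]
      rw [this]
  have hne : {c | ∃ M : MMatch n n, c = cost n n P Q M}.Nonempty := ⟨_, Mid, rfl⟩
  have hbdd : BddBelow {c | ∃ M : MMatch n n, c = cost n n P Q M} := by
    refine ⟨S, ?_⟩
    rintro c ⟨M, rfl⟩
    exact hlb M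
  have hGED : GED n n P Q = S := by
    apply le_antisymm
    · exact csInf_le hbdd ⟨Mid, hcost_id.symm⟩
    · exact le_csInf hne (by rintro c ⟨M, rfl⟩; exact hlb M)
  exact ⟨hGED, Mid, rfl, by rw [hcost_id, hGED]⟩
end
end
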